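/- arXiv:1611.03017 — 2 statements merged into one kernel-verified Lean document; each statement's English description precedes it below -/
import Mathlib

section
/- For all tuples x ∈ ℝ^a and y ∈ ℝ^b, P''(x ⧺ y) = P''(x) · P(y) + P'(x) · P'(y) + P(x) · P''(y), where x ⧺ y ∈ ℝ^{a+b} denotes the concatenation of the two tuples. -/
/-! The weighted alternating sums `∑ₚ (-1)^p C(p,k) eₚ(exp x)` are the values at `T = 1` of the
`k`-th Hasse derivative of `Q_x(T) = ∏ᵢ (1 - exp(xᵢ) T)`, and `P, P', P''` are the cases
`k = 0, 1, 2`. Both `Q` and the Todd factor `∏ td(xᵢ)` are multiplicative under concatenation, so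
the Leibniz rule `Dₖ(fg) = ∑_{i+j=k} Dᵢf · Dⱼg` for Hasse derivatives gives
`P⁽ᵏ⁾(x ⧺ y) = ∑_{i+j=k} P⁽ⁱ⁾(x) P⁽ʲ⁾(y)`, whose case `k = 2` is the claim. -/

noncomputable def td (u : ℝ) : ℝ := if u = 0 then 1 else u / (Real.exp u - 1)

/-- `p`-th elementary symmetric polynomial of a tuple of reals. -/
noncomputable def esymm {n : ℕ} (x : Fin n → ℝ) (p : ℕ) : ℝ :=
  ∑ t ∈ Finset.univ.powersetCard p, ∏ i ∈ t, x i

/-- `P(x) = (∏ td(x_i)) · Σ_p (−1)^p e_p(exp x)`. -/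
noncomputable def Pcl {n : ℕ} (x : Fin n → ℝ) : ℝ :=
  (∏ i, td (x i)) *
    ∑ p ∈ Finset.range (n + 1), (-1 : ℝ) ^ p * esymm (fun i => Real.exp (x i)) p

/-- `P'(x) = (∏ td(x_i)) · Σ_p (−1)^p p e_p(exp x)`. -/
noncomputable def Pcl' {n : ℕ} (x : Fin n → ℝ) : ℝ :=
  (∏ i, td (x i)) *
    ∑ p ∈ Finset.range (n + 1), (-1 : ℝ) ^ p * (p : ℝ) * esymm (fun i => Real.exp (x i)) p

/-- `P''(x) = (∏ td(x_i)) · Σ_p (−1)^p (p(p−1)/2) e_p(exp x)`. -/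
noncomputable def Pcl'' {n : ℕ} (x : Fin n → ℝ) : ℝ :=
  (∏ i, td (x i)) *
    ∑ p ∈ Finset.range (n + 1),
      (-1 : ℝ) ^ p * ((p : ℝ) * ((p : ℝ) - 1) / 2) * esymm (fun i => Real.exp (x i)) p

open Polynomial Finset

theorem Fin.prod_univ_comp_append {M α : Type*} [CommMonoid M] {a b : ℕ} (f : α → M)
    (x : Fin a → α) (y : Fin b → α) :
    ∏ i, f (Fin.append x y i) = (∏ i, f (x i)) * ∏ i, f (y i) := by
  simp [Fin.prod_univ_add]

noncomputable def altEsymmPoly {n : ℕ} (v : Fin n → ℝ) : ℝ[X] :=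
  ∏ i, (1 - C (v i) * X)

theorem altEsymmPoly_eq_sum {n : ℕ} (v : Fin n → ℝ) :
    altEsymmPoly v =
      ∑ p ∈ range (n + 1), monomial p ((-1 : ℝ) ^ p * esymm v p) := by
  have hterm : ∀ p, ∀ t ∈ (univ : Finset (Fin n)).powersetCard p,
      ∏ i ∈ t, C (-v i) * X = monomial p ((-1 : ℝ) ^ p * ∏ i ∈ t, v i) := by
    intro p t ht
    rw [prod_mul_distrib, ← map_prod, prod_const, prod_neg, (mem_powersetCard.mp ht).2,
      C_mul_X_pow_eq_monomial]
  simp only [altEsymmPoly, sub_eq_add_neg, ← neg_mul, ← C_neg, prod_one_add, sum_powerset,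
    card_univ, Fintype.card_fin]
  refine sum_congr rfl fun p _ => ?_
  rw [sum_congr rfl (hterm p), esymm, mul_sum, map_sum]

theorem eval_one_hasseDeriv_sum_monomial {R : Type*} [CommSemiring R] (k : ℕ) (s : Finset ℕ)
    (c : ℕ → R) :
    (hasseDeriv k (∑ p ∈ s, monomial p (c p))).eval 1 = ∑ p ∈ s, (p.choose k : R) * c p := by
  simp [eval_finsetSum]

noncomputable def PclHasse (k : ℕ) {n : ℕ} (x : Fin n → ℝ) : ℝ :=
  (∏ i, td (x i)) * (hasseDeriv k (altEsymmPoly fun i => Real.exp (x i))).eval 1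

theorem PclHasse_eq_sum (k : ℕ) {n : ℕ} (x : Fin n → ℝ) :
    PclHasse k x = (∏ i, td (x i)) * ∑ p ∈ range (n + 1),
      (p.choose k : ℝ) * ((-1 : ℝ) ^ p * esymm (fun i => Real.exp (x i)) p) := by
  rw [PclHasse, altEsymmPoly_eq_sum, eval_one_hasseDeriv_sum_monomial]

theorem PclHasse_zero {n : ℕ} (x : Fin n → ℝ) : PclHasse 0 x = Pcl x := by
  simp [PclHasse_eq_sum, Pcl]

theorem PclHasse_one {n : ℕ} (x : Fin n → ℝ) : PclHasse 1 x = Pcl' x := by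
  simp only [PclHasse_eq_sum, Pcl', Nat.choose_one_right]
  congr 1
  exact sum_congr rfl fun p _ => by ring

theorem PclHasse_two {n : ℕ} (x : Fin n → ℝ) : PclHasse 2 x = Pcl'' x := by
  simp only [PclHasse_eq_sum, Pcl'', Nat.cast_choose_two]
  congr 1
  exact sum_congr rfl fun p _ => by ring

theorem PclHasse_append (k : ℕ) {a b : ℕ} (x : Fin a → ℝ) (y : Fin b → ℝ) :
    PclHasse k (Fin.append x y) =
      ∑ ij ∈ antidiagonal k, PclHasse ij.1 x * PclHasse ij.2 y := by
  have hQ : (altEsymmPoly fun i => Real.exp (Fin.append x y i)) =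
      (altEsymmPoly fun i => Real.exp (x i)) * altEsymmPoly fun i => Real.exp (y i) :=
    Fin.prod_univ_comp_append (fun u => 1 - C (Real.exp u) * X) x y
  rw [PclHasse, Fin.prod_univ_comp_append td, hQ, hasseDeriv_mul, eval_finsetSum, mul_sum]
  refine sum_congr rfl fun ij _ => ?_
  rw [PclHasse, PclHasse, eval_mul]
  ring

/-- second Leibniz rule
`P''(x ⧺ y) = P''(x)·P(y) + P'(x)·P'(y) + P(x)·P''(y)`. -/
theorem Pcl''_append (a b : ℕ) (x : Fin a → ℝ) (y : Fin b → ℝ) :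
    Pcl'' (Fin.append x y) =
      Pcl'' x * Pcl y + Pcl' x * Pcl' y + Pcl x * Pcl'' y := by
  rw [← PclHasse_two, PclHasse_append, Nat.sum_antidiagonal_succ, Nat.sum_antidiagonal_succ,
    Nat.antidiagonal_zero, sum_singleton]
  simp only [zero_add, Nat.reduceAdd, PclHasse_zero, PclHasse_one, PclHasse_two]
  ring
end

section
/- For every r ≥ 1 and every tuple x ∈ ℝ^r, P''(x) = Σ_{1 ≤ i < j ≤ r} P'(x_i) · P'(x_j) · ∏_{k ∉ {i,j}} P(x_k), where for a single real number u one has P(u) = −u and P'(u) = −td(u) · exp(u). In particular P''(x) = 0 when r = 1. -/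
open Finset

theorem sum_card_filter_lt_eq_choose_two {ι : Type*} [LinearOrder ι] (s : Finset ι) :
    ∑ i ∈ s, #{j ∈ s | i < j} = (#s).choose 2 := by
  induction s using Finset.induction_on_max with
  | empty => simp
  | insert a s ha ih =>
    have ha' : a ∉ s := fun h => lt_irrefl a (ha a h)
    have hmax : {j ∈ insert a s | a < j} = ∅ :=
      filter_eq_empty_iff.2 fun j hj => by
        rcases mem_insert.1 hj with rfl | hj
        exacts [lt_irrefl j, (ha j hj).not_gt]
    have hlt : ∀ i ∈ s, #{j ∈ insert a s | i < j} = #{j ∈ s | i < j} + 1 := fun i hi => by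
      rw [filter_insert, if_pos (ha i hi), card_insert_of_notMem (fun h => ha' (mem_filter.1 h).1)]
    rw [sum_insert ha', hmax, card_empty, zero_add, sum_congr rfl hlt, sum_add_distrib, ih,
      card_insert_of_notMem ha', Nat.choose_succ_succ', Nat.choose_one_right, sum_const,
      smul_eq_mul, mul_one, add_comm]

theorem sum_Icc_neg_one_pow_card_mul_prod {ι R : Type*} [DecidableEq ι] [CommRing R]
    {s U : Finset ι} (hsU : s ⊆ U) (y : ι → R) :
    ∑ t ∈ Icc s U, (-1) ^ #t * ∏ k ∈ t, y k
      = (-1) ^ #s * (∏ k ∈ s, y k) * ∏ k ∈ U \ s, (1 - y k) := by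
  have hdisj : ∀ u ∈ (U \ s).powerset, Disjoint s u := fun u hu =>
    disjoint_of_subset_right (mem_powerset.1 hu) disjoint_sdiff
  rw [Icc_eq_image_powerset hsU, sum_image, prod_sub, mul_sum]
  · refine sum_congr rfl fun u hu => ?_
    rw [card_union_of_disjoint (hdisj u hu), prod_union (hdisj u hu)]
    simp only [prod_const_one, mul_one]
    ring
  · intro u hu v hv huv
    simpa [union_sdiff_cancel_left (hdisj u hu), union_sdiff_cancel_left (hdisj v hv)] using
      congrArg (· \ s) huv

theorem sum_powerset_neg_one_pow_mul_choose_two_mul_prod {ι R : Type*} [LinearOrder ι]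
    [CommRing R] (U : Finset ι) (y : ι → R) :
    ∑ t ∈ U.powerset, (-1) ^ #t * ((#t).choose 2 : R) * ∏ k ∈ t, y k
      = ∑ i ∈ U, ∑ j ∈ U with i < j, y i * y j * ∏ k ∈ (U.erase i).erase j, (1 - y k) := by
  calc ∑ t ∈ U.powerset, (-1) ^ #t * ((#t).choose 2 : R) * ∏ k ∈ t, y k
      = ∑ t ∈ U.powerset, ∑ i ∈ t, ∑ j ∈ t with i < j, (-1) ^ #t * ∏ k ∈ t, y k := by
        refine sum_congr rfl fun t _ => ?_
        rw [← sum_card_filter_lt_eq_choose_two, Nat.cast_sum, mul_sum, sum_mul]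
        refine sum_congr rfl fun i _ => ?_
        rw [sum_const, nsmul_eq_mul]
        ring
    _ = ∑ i ∈ U, ∑ j ∈ U with i < j, ∑ t ∈ Icc {i, j} U, (-1) ^ #t * ∏ k ∈ t, y k := by
        rw [sum_comm' (t' := U) (s' := fun i => Icc {i} U) (by simp; tauto)]
        refine sum_congr rfl fun i _ => ?_
        rw [sum_comm' (t' := {j ∈ U | i < j}) (s' := fun j => Icc {i, j} U)
          (by simp [insert_subset_iff]; tauto)]
    _ = _ := by
        refine sum_congr rfl fun i _ => sum_congr rfl fun j hj => ?_
        obtain ⟨hjU, hij⟩ := mem_filter.1 hj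
        rw [sum_Icc_neg_one_pow_card_mul_prod (by simp [insert_subset_iff, *]),
          card_pair hij.ne, prod_pair hij.ne, sdiff_insert, sdiff_singleton_eq_erase,
          erase_right_comm]
        ring

theorem td_mul_one_sub_exp (u : ℝ) : td u * (1 - Real.exp u) = -u := by
  unfold td
  split_ifs with hu
  · simp [hu]
  · have : Real.exp u - 1 ≠ 0 := sub_ne_zero.2 (mt (Real.exp_eq_one_iff u).1 hu)
    field_simp
    ring

theorem sum_range_mul_esymm {n : ℕ} (f : ℕ → ℝ) (y : Fin n → ℝ) :
    ∑ p ∈ range (n + 1), f p * esymm y p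
      = ∑ t ∈ (univ : Finset (Fin n)).powerset, f #t * ∏ k ∈ t, y k := by
  rw [sum_powerset, card_univ, Fintype.card_fin]
  refine sum_congr rfl fun p _ => ?_
  rw [esymm, mul_sum]
  exact sum_congr rfl fun t ht => by rw [(mem_powersetCard.1 ht).2]

theorem prod_td_mul_prod_one_sub_exp {ι : Type*} (s : Finset ι) (x : ι → ℝ) :
    (∏ k ∈ s, td (x k)) * ∏ k ∈ s, (1 - Real.exp (x k)) = ∏ k ∈ s, -x k := by
  rw [← prod_mul_distrib]
  exact prod_congr rfl fun k _ => td_mul_one_sub_exp (x k)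

theorem Pcl''_eq_sum_general (r : ℕ) (x : Fin r → ℝ) :
    Pcl'' x =
      ∑ i, ∑ j ∈ Finset.univ.filter (fun j => i < j),
        (-(td (x i) * Real.exp (x i))) * (-(td (x j) * Real.exp (x j))) *
          ∏ k ∈ (Finset.univ.erase i).erase j, (-(x k)) := by
  simp only [Pcl'', ← Nat.cast_choose_two,
    sum_range_mul_esymm fun p => (-1 : ℝ) ^ p * (p.choose 2 : ℝ),
    sum_powerset_neg_one_pow_mul_choose_two_mul_prod, mul_sum]
  refine sum_congr rfl fun i _ => sum_congr rfl fun j hij => ?_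
  have hj : j ∈ univ.erase i := mem_erase.2 ⟨(mem_filter.1 hij).2.ne', mem_univ j⟩
  rw [← mul_prod_erase univ (fun k => td (x k)) (mem_univ i),
    ← mul_prod_erase _ (fun k => td (x k)) hj]
  linear_combination td (x i) * Real.exp (x i) * (td (x j) * Real.exp (x j)) *
    prod_td_mul_prod_one_sub_exp ((univ.erase i).erase j) x

/-- for `r ≥ 1`,
`P''(x) = Σ_{i<j} P'(x_i)·P'(x_j)·∏_{k ∉ {i,j}} P(x_k)` with `P(u) = −u`,
`P'(u) = −td(u)·exp(u)`; in particular it vanishes when `r = 1`. -/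
theorem Pcl''_eq_sum (r : ℕ) (hr : 1 ≤ r) (x : Fin r → ℝ) :
    Pcl'' x =
      ∑ i, ∑ j ∈ Finset.univ.filter (fun j => i < j),
        (-(td (x i) * Real.exp (x i))) * (-(td (x j) * Real.exp (x j))) *
          ∏ k ∈ (Finset.univ.erase i).erase j, (-(x k)) :=
  Pcl''_eq_sum_general r x
end
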